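/- Let K < 0 be a real number, n ∈ ℕ, and let x, y ∈ ℝ^{n+1} both lie on the Lorentz hyperboloid L^n_K. Then the vector w := y − K⟨x,y⟩_L·x satisfies ⟨w, x⟩_L = 0; moreover, if x ≠ y then w ≠ 0 and ⟨w,w⟩_L = (1/K)·(1 − (K⟨x,y⟩_L)²) > 0. -/

import Mathlib

/-- The Lorentzian scalar product on `ℝ^{n+1}`:
`⟨x,y⟩_L = -x₀y₀ + ∑_{i=1}^n x_i y_i`. -/
def lprod {n : ℕ} (x y : Fin (n + 1) → ℝ) : ℝ :=
  -(x 0 * y 0) + ∑ i : Fin n, x i.succ * y i.succ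

/-!
The vector `w` is the Lorentz-orthogonal projection of `y` onto the tangent space
`x^⊥`, so `⟨w, x⟩_L = 0`, and expanding gives `⟨w, w⟩_L = ⟨y, y⟩_L - K⟨x, y⟩_L²`.
Positivity comes from the reversed Cauchy–Schwarz phenomenon: the Lorentz-orthogonal
complement of a timelike vector is spacelike, which follows from the Euclidean
Cauchy–Schwarz inequality on the spatial coordinates. Finally `w = 0` would make `y` a
multiple `c • x` with `c² = 1`, and `c = 1` because both points lie on the upper sheet.
-/

section Lorentz

variable {n : ℕ}

lemma lprod_comm (x y : Fin (n + 1) → ℝ) : lprod x y = lprod y x := by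
  simp only [lprod, mul_comm]

lemma lprod_sub_left (x y z : Fin (n + 1) → ℝ) :
    lprod (x - y) z = lprod x z - lprod y z := by
  simp only [lprod, Pi.sub_apply, sub_mul, Finset.sum_sub_distrib]
  ring

lemma lprod_smul_left (c : ℝ) (x y : Fin (n + 1) → ℝ) :
    lprod (c • x) y = c * lprod x y := by
  simp only [lprod, Pi.smul_apply, smul_eq_mul, mul_add, Finset.mul_sum, mul_assoc, mul_neg]

lemma lprod_sub_right (x y z : Fin (n + 1) → ℝ) :
    lprod x (y - z) = lprod x y - lprod x z := by
  rw [lprod_comm, lprod_sub_left, lprod_comm y, lprod_comm z]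

lemma lprod_smul_right (c : ℝ) (x y : Fin (n + 1) → ℝ) :
    lprod x (c • y) = c * lprod x y := by
  rw [lprod_comm, lprod_smul_left, lprod_comm]

lemma lprod_self (x : Fin (n + 1) → ℝ) :
    lprod x x = -x 0 ^ 2 + ∑ i : Fin n, x i.succ ^ 2 := by
  simp only [lprod, sq]

lemma lprod_self_pos_of_lprod_eq_zero {w x : Fin (n + 1) → ℝ} (hx : lprod x x < 0)
    (hwx : lprod w x = 0) (hw : w ≠ 0) : 0 < lprod w w := by
  set a := ∑ i : Fin n, w i.succ ^ 2
  set b := ∑ i : Fin n, x i.succ ^ 2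
  have ha : 0 ≤ a := by positivity
  have hb : 0 ≤ b := by positivity
  have hxb : b < x 0 ^ 2 := by rw [lprod_self] at hx; linarith
  have hspatial : ∑ i : Fin n, w i.succ * x i.succ = w 0 * x 0 := by
    rw [lprod] at hwx; linarith
  have hcs : (w 0 * x 0) ^ 2 ≤ a * b := by
    rw [← hspatial]; exact Finset.sum_mul_sq_le_sq_mul_sq _ _ _
  rw [lprod_self]
  rcases ha.eq_or_lt with ha0 | ha0
  · exfalso
    have hsucc : ∀ i : Fin n, w i.succ = 0 := fun i =>
      pow_eq_zero_iff two_ne_zero |>.mp <|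
        (Finset.sum_eq_zero_iff_of_nonneg fun i _ => sq_nonneg (w i.succ)).mp ha0.symm i
          (Finset.mem_univ i)
    have hx0 : x 0 ≠ 0 := by rintro h; rw [h] at hxb; linarith
    have h0 : w 0 = 0 := by
      have : (w 0 * x 0) ^ 2 ≤ 0 := by rw [← ha0, zero_mul] at hcs; exact hcs
      simpa [hx0] using pow_eq_zero_iff two_ne_zero |>.mp (le_antisymm this (sq_nonneg _))
    exact hw <| funext fun j => Fin.cases h0 hsucc j
  · have : w 0 ^ 2 * x 0 ^ 2 < a * x 0 ^ 2 := by
      rw [← mul_pow]; exact hcs.trans_lt (mul_lt_mul_of_pos_left hxb ha0)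
    linarith [lt_of_mul_lt_mul_right this (sq_nonneg (x 0))]

lemma eq_of_eq_smul_of_lprod_self_eq {x y : Fin (n + 1) → ℝ} {c : ℝ}
    (hxy : lprod x x = lprod y y) (hxx : lprod x x ≠ 0) (hx0 : 0 < x 0) (hy0 : 0 < y 0)
    (h : y = c • x) : y = x := by
  have hc2 : c ^ 2 = 1 := by
    have := hxy
    rw [h, lprod_smul_left, lprod_smul_right, ← mul_assoc, ← sq] at this
    exact (mul_eq_right₀ hxx).mp this.symm
  have hc : 0 < c := by
    have : y 0 = c * x 0 := by rw [h, Pi.smul_apply, smul_eq_mul]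
    exact pos_of_mul_pos_left (this ▸ hy0) hx0.le
  rw [h, (pow_eq_one_iff_of_nonneg hc.le two_ne_zero).mp hc2, one_smul]

variable {K : ℝ} {x : Fin (n + 1) → ℝ}

lemma lprod_sub_proj_left (hK : K ≠ 0) (hx : lprod x x = 1 / K) (y : Fin (n + 1) → ℝ) :
    lprod (y - (K * lprod x y) • x) x = 0 := by
  rw [lprod_sub_left, lprod_smul_left, hx, lprod_comm]
  field_simp
  ring

lemma lprod_sub_proj_self (hx : lprod x x = 1 / K) (y : Fin (n + 1) → ℝ) :
    lprod (y - (K * lprod x y) • x) (y - (K * lprod x y) • x) =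
      lprod y y - K * lprod x y ^ 2 := by
  rw [lprod_sub_left, lprod_sub_right, lprod_sub_right, lprod_smul_left, lprod_smul_left,
    lprod_smul_right, lprod_smul_right, hx, lprod_comm y x]
  field_simp
  ring

end Lorentz

/-- For `K < 0` and `x, y ∈ L^n_K`, the vector `w = y − K⟨x,y⟩_L·x` is tangent
at `x` (`⟨w,x⟩_L = 0`); moreover, if `x ≠ y` then `w ≠ 0` and
`⟨w,w⟩_L = (1/K)(1 − (K⟨x,y⟩_L)²) > 0`. -/
theorem log_map_direction_tangent_and_spacelike (K : ℝ) (hK : K < 0) (n : ℕ)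
    (x y : Fin (n + 1) → ℝ)
    (hx : lprod x x = 1 / K) (hx0 : x 0 > 0)
    (hy : lprod y y = 1 / K) (hy0 : y 0 > 0)
    (w : Fin (n + 1) → ℝ) (hw : w = y - (K * lprod x y) • x) :
    lprod w x = 0 ∧
      (x ≠ y → w ≠ 0 ∧ lprod w w = (1 / K) * (1 - (K * lprod x y) ^ 2) ∧
        lprod w w > 0) := by
  subst hw
  have hK0 : K ≠ 0 := hK.ne
  have horth := lprod_sub_proj_left hK0 hx y
  refine ⟨horth, fun hne => ?_⟩
  have hw0 : y - (K * lprod x y) • x ≠ 0 := fun h =>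
    hne (eq_of_eq_smul_of_lprod_self_eq (hx.trans hy.symm) (by simp [hx, hK0]) hx0 hy0
      (sub_eq_zero.mp h)).symm
  refine ⟨hw0, ?_, lprod_self_pos_of_lprod_eq_zero (by simpa [hx] using hK) horth hw0⟩
  rw [lprod_sub_proj_self hx, hy]
  field_simp
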